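/- arXiv:1807.01441 — 4 statements merged into one kernel-verified Lean document; each statement's English description precedes it below -/
import Mathlib

section
/- For β ∈ ℂ with |Re β| < 1/2, the function 1 - k̂(ξ) = 1 + sin²(πβ)/(cosh²(πξ) - sin²(πβ)) = cosh²(πξ)/(cosh²(πξ) - sin²(πβ)) is nonvanishing for all real ξ and the curve {1 - k̂(ξ) : ξ ∈ ℝ} (closed up at its common limit 1 as ξ → ±∞) has winding number zero about the origin. -/
/-!
Since `cosh² x - sin² z = cos² z + sinh² x` and `Re (cos z) > 0` for `|Re z| < π/2`, the
denominator of `1 - k̂` lies in the slit plane `ℂ ∖ (-∞, 0]`, hence so does `1 - k̂` itself. Its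
principal logarithm is therefore a continuous logarithm along the curve, and it tends to
`log 1 = 0` at `±∞` because `cosh² (πξ) → ∞`.
-/

open Complex Filter

open scoped Topology

namespace Complex

lemma inv_mem_slitPlane {z : ℂ} (hz : z ∈ slitPlane) : z⁻¹ ∈ slitPlane := by
  have hnormSq : 0 < normSq z := normSq_pos.mpr (slitPlane_ne_zero hz)
  rw [mem_slitPlane_iff] at hz ⊢
  rw [inv_re, inv_im]
  rcases hz with hre | him
  · exact Or.inl (div_pos hre hnormSq)
  · exact Or.inr (div_ne_zero (neg_ne_zero.mpr him) hnormSq.ne')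

lemma ofReal_mul_mem_slitPlane {r : ℝ} (hr : 0 < r) {z : ℂ} (hz : z ∈ slitPlane) :
    (r : ℂ) * z ∈ slitPlane := by
  rw [mem_slitPlane_iff] at hz ⊢
  rw [re_ofReal_mul, im_ofReal_mul]
  rcases hz with hre | him
  · exact Or.inl (mul_pos hr hre)
  · exact Or.inr (mul_ne_zero hr.ne' him)

lemma add_ofReal_mem_slitPlane {z : ℂ} (hz : z ∈ slitPlane) {r : ℝ} (hr : 0 ≤ r) :
    z + r ∈ slitPlane := by
  rw [mem_slitPlane_iff] at hz ⊢
  rw [add_re, add_im, ofReal_re, ofReal_im, add_zero]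
  rcases hz with hre | him
  · exact Or.inl (by linarith)
  · exact Or.inr him

lemma sq_mem_slitPlane_of_re_pos {z : ℂ} (hz : 0 < z.re) : z ^ 2 ∈ slitPlane := by
  rw [mem_slitPlane_iff, sq, mul_re, mul_im]
  by_cases him : z.im = 0
  · left
    rw [him]
    nlinarith
  · right
    rw [mul_comm z.im, ← two_mul]
    positivity

lemma re_cos_pos {z : ℂ} (hz : |z.re| < Real.pi / 2) : 0 < (cos z).re := by
  have hre : (cos z).re = Real.cos z.re * Real.cosh z.im := by
    rw [cos_eq]
    simp [← ofReal_cos, ← ofReal_cosh, ← ofReal_sin, ← ofReal_sinh]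
  rw [hre]
  exact mul_pos (Real.cos_pos_of_mem_Ioo (abs_lt.mp hz)) (Real.cosh_pos _)

lemma cosh_sq_div_cosh_sq_sub_sin_sq_mem_slitPlane {z : ℂ} (hz : |z.re| < Real.pi / 2) (x : ℝ) :
    cosh x ^ 2 / (cosh x ^ 2 - sin z ^ 2) ∈ slitPlane := by
  have hden : cosh x ^ 2 - sin z ^ 2 = cos z ^ 2 + (Real.sinh x ^ 2 : ℝ) := by
    push_cast
    linear_combination cosh_sq (x : ℂ) - sin_sq_add_cos_sq z
  rw [div_eq_mul_inv, hden, ← ofReal_cosh, ← ofReal_pow]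
  exact ofReal_mul_mem_slitPlane (by positivity) <| inv_mem_slitPlane <|
    add_ofReal_mem_slitPlane (sq_mem_slitPlane_of_re_pos (re_cos_pos hz)) (sq_nonneg _)

end Complex

lemma Real.tendsto_cosh_cocompact : Tendsto Real.cosh (cocompact ℝ) atTop := by
  refine tendsto_atTop_mono (fun x => ?_) ((tendsto_norm_cocompact_atTop.atTop_add
    (tendsto_const_nhds (x := (1 : ℝ)))).atTop_div_const two_pos)
  rw [← Real.cosh_abs, Real.cosh_eq, Real.norm_eq_abs]
  linarith [Real.add_one_le_exp |x|, Real.exp_pos (-|x|)]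

lemma tendsto_div_sub_const_of_tendsto_cobounded {α 𝕜 : Type*} [NormedField 𝕜] {l : Filter α}
    {g : α → 𝕜} (hg : Tendsto g l (Bornology.cobounded 𝕜)) (s : 𝕜) :
    Tendsto (fun x => g x / (g x - s)) l (𝓝 1) := by
  have hinv : Tendsto (fun x => (1 - s * (g x)⁻¹)⁻¹) l (𝓝 1) := by
    simpa using ((tendsto_const_nhds.sub (tendsto_const_nhds.mul
      (tendsto_inv₀_cobounded.comp hg))).inv₀ (by simp) : Tendsto _ l (𝓝 ((1 - s * 0)⁻¹)))
  refine hinv.congr' ?_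
  filter_upwards [hg.eventually_ne_cobounded 0] with x hx
  rw [← div_eq_mul_inv, one_sub_div hx, inv_div]

lemma tendsto_cosh_const_mul_sq_cobounded {c : ℝ} (hc : c ≠ 0) :
    Tendsto (fun x : ℝ => cosh ((c : ℂ) * x) ^ 2) (cocompact ℝ) (Bornology.cobounded ℂ) := by
  rw [← tendsto_norm_atTop_iff_cobounded]
  have hnorm : ∀ x : ℝ, ‖cosh ((c : ℂ) * x) ^ 2‖ = Real.cosh (c * x) ^ 2 := fun x => by
    rw [← ofReal_mul, ← ofReal_cosh, ← ofReal_pow, norm_real, Real.norm_of_nonneg (by positivity)]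
  simp only [hnorm]
  exact (tendsto_pow_atTop two_ne_zero).comp
    (Real.tendsto_cosh_cocompact.comp (tendsto_cocompact_mul_left₀ hc))

/-- For `|Re β| < 1/2`, the function `1 - k̂(ξ) = cosh²(πξ)/(cosh²(πξ) - sin²(πβ))` is
nonvanishing for real `ξ`, and the curve `{1 - k̂(ξ) : ξ ∈ ℝ}`, closed up at its common limit
`1` as `ξ → ±∞`, has winding number zero about the origin (expressed via the existence of a
continuous logarithm along the curve with equal limits `0 = log 1` at `±∞`). -/
theorem stmt5 (β : ℂ) (hβ : |β.re| < 1/2) :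
    let khat : ℝ → ℂ := fun ξ => -Complex.sin ((Real.pi : ℂ) * β) ^ 2 /
      (Complex.cosh ((Real.pi : ℂ) * (ξ : ℂ)) ^ 2 - Complex.sin ((Real.pi : ℂ) * β) ^ 2)
    let f : ℝ → ℂ := fun ξ => Complex.cosh ((Real.pi : ℂ) * (ξ : ℂ)) ^ 2 /
      (Complex.cosh ((Real.pi : ℂ) * (ξ : ℂ)) ^ 2 - Complex.sin ((Real.pi : ℂ) * β) ^ 2)
    (∀ ξ : ℝ, 1 - khat ξ = f ξ) ∧
    (∀ ξ : ℝ, f ξ ≠ 0) ∧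
    (∃ φ : ℝ → ℂ, Continuous φ ∧ (∀ ξ : ℝ, Complex.exp (φ ξ) = f ξ) ∧
      Tendsto φ atTop (nhds 0) ∧ Tendsto φ atBot (nhds 0)) := by
  intro khat f
  have hz : |((Real.pi : ℂ) * β).re| < Real.pi / 2 := by
    rw [re_ofReal_mul, abs_mul, abs_of_pos Real.pi_pos]
    nlinarith [Real.pi_pos]
  have hslit (ξ : ℝ) : f ξ ∈ slitPlane := by
    simpa only [f, ofReal_mul] using cosh_sq_div_cosh_sq_sub_sin_sq_mem_slitPlane hz (Real.pi * ξ)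
  have hden (ξ : ℝ) : cosh ((Real.pi : ℂ) * ξ) ^ 2 - sin ((Real.pi : ℂ) * β) ^ 2 ≠ 0 :=
    (div_ne_zero_iff.mp (slitPlane_ne_zero (hslit ξ))).2
  have hcont : Continuous f := .div (by fun_prop) (by fun_prop) hden
  have hlim : Tendsto (log ∘ f) (cocompact ℝ) (𝓝 0) := by
    rw [← log_one]
    exact (continuousAt_clog (by simp)).tendsto.comp
      (tendsto_div_sub_const_of_tendsto_cobounded
        (tendsto_cosh_const_mul_sq_cobounded Real.pi_ne_zero) _)
  refine ⟨fun ξ => ?_, fun ξ => slitPlane_ne_zero (hslit ξ), log ∘ f, hcont.clog hslit,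
    fun ξ => exp_log (slitPlane_ne_zero (hslit ξ)), hlim.mono_left atTop_le_cocompact,
    hlim.mono_left atBot_le_cocompact⟩
  simp only [khat, f]
  field_simp [hden ξ]
  ring
end

section
/- Let β ∈ ℂ with |Re β| < 1/2 and δ > 0 with Re β + δ < 1/2 and -Re β + δ < 1/2. Suppose an integral operator K_e on L^{2,-β,n}(0,∞) has kernel satisfying |K_e(x,y)| ≤ ε_n (n+x)^{-1/2-Re β-δ}(n+y)^{-1/2+Re β-δ} for all x,y > 0, where ε_n → 0. Then the operator norm of K_e on L^{2,-β,n}(0,∞) is at most C ε_n n^{-2δ} for a constant C depending only on β and δ; in particular ‖K_e‖ = o(n^{-δ}) as n → ∞. -/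
/-!
The kernel bound separates the variables:
`‖∫ K_e(nx,y) f(y) dy‖ ≤ ε (n+nx)^(-1/2-Re β-δ) ∫ (n+y)^(-1/2+Re β-δ) |f(y)| dy`.
Substituting `y = nu`, the last integral is
`n^(1/2+Re β-δ) ∫ (1+u)^(-1/2-δ) |(1+u)^β f(nu)| du`, which Cauchy–Schwarz bounds by
`n^(1/2+Re β-δ) ‖(1+u)^(-1/2-δ)‖₂ ‖f‖_{2,-β,n}`. Since
`(1+x)^(Re β) (n+nx)^(-1/2-Re β-δ) = n^(-1/2-Re β-δ) (1+x)^(-1/2-δ)`, the outer `L²` norm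
produces the same factor `‖(1+x)^(-1/2-δ)‖₂`, whose square is `∫₀^∞ (1+x)^(-1-2δ) dx = 1/(2δ)`;
the powers of `n` multiply to `n^(-2δ)`, so `C = 1/(2δ)` works.
-/

open Complex MeasureTheory Set
open scoped ENNReal

lemma lintegral_Ioi_zero_comp_mul_left {c : ℝ} (hc : 0 < c) (h : ℝ → ℝ≥0∞) :
    ∫⁻ u in Ioi 0, h (c * u) = ENNReal.ofReal c⁻¹ * ∫⁻ y in Ioi 0, h y := by
  have hemb : MeasurableEmbedding (c * ·) := (Homeomorph.mulLeft₀ c hc.ne').measurableEmbedding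
  have hpre : (c * ·) ⁻¹' Ioi (0:ℝ) = Ioi 0 := by ext u; simp [mul_pos_iff_of_pos_left hc]
  conv_lhs => rw [← hpre]
  rw [← hemb.lintegral_map, ← hemb.restrict_map, Real.map_volume_mul_left hc.ne',
    Measure.restrict_smul, lintegral_smul_measure, abs_of_pos (inv_pos.2 hc), smul_eq_mul]

lemma lintegral_Ioi_zero_one_add_rpow {q : ℝ} (hq : q < -1) :
    ∫⁻ x in Ioi 0, ENNReal.ofReal ((1 + x) ^ q) = ENNReal.ofReal (-(q + 1))⁻¹ := by
  have hpre : (1 + ·) ⁻¹' Ioi (1:ℝ) = Ioi 0 := by simp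
  rw [← hpre, (measurePreserving_add_left volume (1:ℝ)).setLIntegral_comp_preimage_emb
    (measurableEmbedding_addLeft 1) (fun x => ENNReal.ofReal (x ^ q)),
    ← ofReal_integral_eq_lintegral_ofReal (integrableOn_Ioi_rpow_of_lt hq one_pos)
        (ae_restrict_of_forall_mem measurableSet_Ioi fun x hx =>
          Real.rpow_nonneg (zero_le_one.trans (le_of_lt hx)) q),
    integral_Ioi_rpow_of_lt hq one_pos, Real.one_rpow]
  congr 1; field_simp

lemma eLpNorm_one_add_rpow_neg_half_sub_sq {δ : ℝ} (hδ : 0 < δ) :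
    eLpNorm (fun x : ℝ => (1 + x) ^ (-(1/2 : ℝ) - δ)) 2 (volume.restrict (Ioi 0)) ^ 2
      = ENNReal.ofReal (2 * δ)⁻¹ := by
  have := eLpNorm_nnreal_pow_eq_lintegral (f := fun x : ℝ => (1 + x) ^ (-(1/2 : ℝ) - δ))
    (μ := volume.restrict (Ioi 0)) (p := 2) two_ne_zero
  simp only [ENNReal.coe_ofNat, NNReal.coe_ofNat, ENNReal.rpow_ofNat] at this
  rw [this, show (2 * δ)⁻¹ = (-(-1 - 2 * δ + 1))⁻¹ by ring,
    ← lintegral_Ioi_zero_one_add_rpow (by linarith)]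
  refine setLIntegral_congr_fun measurableSet_Ioi fun x hx => ?_
  have hx1 : 0 < 1 + x := by have := mem_Ioi.1 hx; linarith
  rw [Real.enorm_eq_ofReal (Real.rpow_nonneg hx1.le _),
    ← ENNReal.ofReal_pow (Real.rpow_nonneg hx1.le _), ← Real.rpow_natCast, ← Real.rpow_mul hx1.le]
  congr 2
  push_cast
  ring

lemma enorm_ofReal_cpow_of_pos {x : ℝ} (hx : 0 < x) (β : ℂ) :
    ‖(x : ℂ) ^ β‖ₑ = ENNReal.ofReal (x ^ β.re) := by
  rw [← ofReal_norm, Complex.norm_cpow_eq_rpow_re_of_pos hx]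

lemma enorm_integral_mul_le_of_norm_le_mul {α 𝕜 : Type*} [MeasurableSpace α] [RCLike 𝕜]
    {μ : Measure α} {K f : α → 𝕜} {w : α → ℝ} {c : ℝ} (hc : 0 ≤ c)
    (hK : ∀ᵐ y ∂μ, ‖K y‖ ≤ c * w y) :
    ‖∫ y, K y * f y ∂μ‖ₑ ≤ ENNReal.ofReal c * ∫⁻ y, ENNReal.ofReal (w y) * ‖f y‖ₑ ∂μ := by
  rw [← lintegral_const_mul' _ _ ENNReal.ofReal_ne_top]
  refine (enorm_integral_le_lintegral_enorm _).trans (lintegral_mono_ae ?_)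
  filter_upwards [hK] with y hy
  rw [enorm_mul, ← mul_assoc, ← ENNReal.ofReal_mul hc, ← ofReal_norm]
  gcongr

lemma quasiMeasurePreserving_const_mul_restrict_Ioi_zero {c : ℝ} (hc : 0 < c) :
    Measure.QuasiMeasurePreserving (c * ·) (volume.restrict (Ioi 0)) (volume.restrict (Ioi 0)) :=
  Measure.QuasiMeasurePreserving.restrict ⟨measurable_const_mul c, by
    rw [Real.map_volume_mul_left hc.ne']; exact Measure.smul_absolutelyContinuous⟩
    fun _ hu => mul_pos hc hu

lemma lintegral_Ioi_zero_rpow_add_mul_enorm_le {n δ : ℝ} (hn : 0 < n) (β : ℂ) {f : ℝ → ℂ}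
    (hf : AEStronglyMeasurable f (volume.restrict (Ioi 0))) :
    ∫⁻ y in Ioi 0, ENNReal.ofReal ((n + y) ^ (-(1/2 : ℝ) + β.re - δ)) * ‖f y‖ₑ
      ≤ ENNReal.ofReal (n ^ ((1/2 : ℝ) + β.re - δ))
        * eLpNorm (fun x : ℝ => (1 + x) ^ (-(1/2 : ℝ) - δ)) 2 (volume.restrict (Ioi 0))
        * eLpNorm (fun x : ℝ => ((1 + x : ℝ) : ℂ) ^ β * f (n * x)) 2
            (volume.restrict (Ioi 0)) := by
  set φ : ℝ → ℝ := fun x => (1 + x) ^ (-(1/2 : ℝ) - δ)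
  set g : ℝ → ℂ := fun x => ((1 + x : ℝ) : ℂ) ^ β * f (n * x)
  have hφ : AEStronglyMeasurable φ (volume.restrict (Ioi 0)) :=
    (by fun_prop : Measurable φ).aestronglyMeasurable
  have hg : AEStronglyMeasurable g (volume.restrict (Ioi 0)) :=
    (by fun_prop : Measurable fun x : ℝ => ((1 + x : ℝ) : ℂ) ^ β).aestronglyMeasurable.mul
      (hf.comp_quasiMeasurePreserving (quasiMeasurePreserving_const_mul_restrict_Ioi_zero hn))
  have hpoint : ∀ u ∈ Ioi (0:ℝ), ENNReal.ofReal n *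
      (ENNReal.ofReal ((n + n * u) ^ (-(1/2 : ℝ) + β.re - δ)) * ‖f (n * u)‖ₑ)
      = ENNReal.ofReal (n ^ ((1/2 : ℝ) + β.re - δ)) * ‖(φ • g) u‖ₑ := by
    intro u hu
    have hu1 : 0 < 1 + u := by have := mem_Ioi.1 hu; linarith
    simp only [φ, g, Pi.smul_apply', enorm_smul, enorm_mul, enorm_ofReal_cpow_of_pos hu1,
      Real.enorm_eq_ofReal (Real.rpow_nonneg hu1.le _)]
    rw [← mul_assoc, ← mul_assoc, ← mul_assoc, ← ENNReal.ofReal_mul hn.le,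
      ← ENNReal.ofReal_mul (by positivity), ← ENNReal.ofReal_mul (by positivity)]
    congr 2
    rw [show n + n * u = n * (1 + u) by ring, Real.mul_rpow hn.le hu1.le, mul_assoc,
      ← Real.rpow_add hu1, show (1/2 : ℝ) + β.re - δ = 1 + (-(1/2) + β.re - δ) by ring,
      Real.rpow_add hn, Real.rpow_one,
      show -(1/2 : ℝ) - δ + β.re = -(1/2) + β.re - δ by ring, mul_assoc]
  calc ∫⁻ y in Ioi 0, ENNReal.ofReal ((n + y) ^ (-(1/2 : ℝ) + β.re - δ)) * ‖f y‖ₑ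
      = ∫⁻ u in Ioi 0, ENNReal.ofReal n *
          (ENNReal.ofReal ((n + n * u) ^ (-(1/2 : ℝ) + β.re - δ)) * ‖f (n * u)‖ₑ) := by
        rw [lintegral_const_mul' _ _ ENNReal.ofReal_ne_top, lintegral_Ioi_zero_comp_mul_left hn
          (fun y => ENNReal.ofReal ((n + y) ^ (-(1/2 : ℝ) + β.re - δ)) * ‖f y‖ₑ), ← mul_assoc,
          ← ENNReal.ofReal_mul hn.le, mul_inv_cancel₀ hn.ne', ENNReal.ofReal_one, one_mul]
    _ = ENNReal.ofReal (n ^ ((1/2 : ℝ) + β.re - δ))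
          * eLpNorm (φ • g) 1 (volume.restrict (Ioi 0)) := by
        rw [eLpNorm_one_eq_lintegral_enorm, ← lintegral_const_mul' _ _ ENNReal.ofReal_ne_top]
        exact setLIntegral_congr_fun measurableSet_Ioi hpoint
    _ ≤ _ := by
        rw [mul_assoc]
        gcongr
        exact eLpNorm_smul_le_mul_eLpNorm hg hφ

lemma eLpNorm_weighted_integral_kernel_le {n ε δ : ℝ} (hn : 0 < n) (hε : 0 ≤ ε) (β : ℂ)
    {Ke : ℝ → ℝ → ℂ}
    (hKe : ∀ x y : ℝ, 0 < x → 0 < y →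
      ‖Ke x y‖ ≤ ε * (n + x) ^ (-(1/2 : ℝ) - β.re - δ) * (n + y) ^ (-(1/2 : ℝ) + β.re - δ))
    (f : ℝ → ℂ) :
    eLpNorm (fun x : ℝ => ((1 + x : ℝ) : ℂ) ^ β * ∫ y in Ioi 0, Ke (n * x) y * f y) 2
        (volume.restrict (Ioi 0))
      ≤ ENNReal.ofReal (ε * n ^ (-(1/2 : ℝ) - β.re - δ))
        * (∫⁻ y in Ioi 0, ENNReal.ofReal ((n + y) ^ (-(1/2 : ℝ) + β.re - δ)) * ‖f y‖ₑ)
        * eLpNorm (fun x : ℝ => (1 + x) ^ (-(1/2 : ℝ) - δ)) 2 (volume.restrict (Ioi 0)) := by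
  refine eLpNorm_le_mul_eLpNorm_of_ae_le_mul'' 2
    (by fun_prop : Measurable fun x : ℝ => (1 + x) ^ (-(1/2 : ℝ) - δ)).aestronglyMeasurable ?_
  filter_upwards [ae_restrict_mem measurableSet_Ioi] with x hx
  have hx1 : 0 < 1 + x := by have := mem_Ioi.1 hx; linarith
  have hnx : 0 < n + n * x := by nlinarith [mem_Ioi.1 hx]
  have hweight : (1 + x) ^ β.re * (ε * (n + n * x) ^ (-(1/2 : ℝ) - β.re - δ))
      = ε * n ^ (-(1/2 : ℝ) - β.re - δ) * (1 + x) ^ (-(1/2 : ℝ) - δ) := by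
    rw [show n + n * x = n * (1 + x) by ring, Real.mul_rpow hn.le hx1.le,
      show -(1/2 : ℝ) - δ = β.re + (-(1/2) - β.re - δ) by ring, Real.rpow_add hx1]
    ring
  have hinner := enorm_integral_mul_le_of_norm_le_mul (μ := volume.restrict (Ioi 0)) (f := f)
    (mul_nonneg hε (Real.rpow_nonneg hnx.le (-(1/2 : ℝ) - β.re - δ)))
    (ae_restrict_of_forall_mem measurableSet_Ioi fun y hy => hKe (n * x) y (mul_pos hn hx) hy)
  calc ‖((1 + x : ℝ) : ℂ) ^ β * ∫ y in Ioi 0, Ke (n * x) y * f y‖ₑ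
      ≤ ENNReal.ofReal ((1 + x) ^ β.re)
          * (ENNReal.ofReal (ε * (n + n * x) ^ (-(1/2 : ℝ) - β.re - δ))
            * ∫⁻ y in Ioi 0, ENNReal.ofReal ((n + y) ^ (-(1/2 : ℝ) + β.re - δ)) * ‖f y‖ₑ) := by
        rw [enorm_mul, enorm_ofReal_cpow_of_pos hx1]
        gcongr
    _ = ENNReal.ofReal ((1 + x) ^ β.re * (ε * (n + n * x) ^ (-(1/2 : ℝ) - β.re - δ)))
          * ∫⁻ y in Ioi 0, ENNReal.ofReal ((n + y) ^ (-(1/2 : ℝ) + β.re - δ)) * ‖f y‖ₑ := by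
        rw [ENNReal.ofReal_mul (Real.rpow_nonneg hx1.le _), mul_assoc]
    _ = _ := by
        rw [hweight, ENNReal.ofReal_mul (mul_nonneg hε (by positivity)),
          Real.enorm_eq_ofReal (by positivity)]
        ring

theorem stmt9_general (β : ℂ) (δ : ℝ) (hδ : 0 < δ) :
    ∃ C : ℝ, 0 < C ∧ ∀ n : ℕ, 1 ≤ n → ∀ ε : ℝ, 0 ≤ ε → ∀ Ke : ℝ → ℝ → ℂ,
      (∀ x y : ℝ, 0 < x → 0 < y →
        ‖Ke x y‖ ≤ ε * ((n : ℝ) + x) ^ (-(1/2 : ℝ) - β.re - δ)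
          * ((n : ℝ) + y) ^ (-(1/2 : ℝ) + β.re - δ)) →
      ∀ f : ℝ → ℂ, AEStronglyMeasurable f (volume.restrict (Ioi (0:ℝ))) →
        eLpNorm (fun x : ℝ => ((1 + x : ℝ) : ℂ) ^ β *
            ∫ y in Ioi (0:ℝ), Ke ((n : ℝ) * x) y * f y) 2 (volume.restrict (Ioi (0:ℝ)))
          ≤ ENNReal.ofReal (C * ε * (n : ℝ) ^ (-2 * δ)) *
            eLpNorm (fun x : ℝ => ((1 + x : ℝ) : ℂ) ^ β * f ((n : ℝ) * x)) 2
              (volume.restrict (Ioi (0:ℝ))) := by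
  refine ⟨(2 * δ)⁻¹, by positivity, fun n hn ε hε Ke hKe f hf => ?_⟩
  have hn0 : (0 : ℝ) < n := by exact_mod_cast hn
  set Φ := eLpNorm (fun x : ℝ => (1 + x) ^ (-(1/2 : ℝ) - δ)) 2 (volume.restrict (Ioi 0))
  calc _ ≤ _ := eLpNorm_weighted_integral_kernel_le hn0 hε β hKe f
    _ ≤ ENNReal.ofReal (ε * (n : ℝ) ^ (-(1/2 : ℝ) - β.re - δ))
          * (ENNReal.ofReal ((n : ℝ) ^ ((1/2 : ℝ) + β.re - δ)) * Φ
            * eLpNorm (fun x : ℝ => ((1 + x : ℝ) : ℂ) ^ β * f ((n : ℝ) * x)) 2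
              (volume.restrict (Ioi 0))) * Φ := by
        gcongr
        exact lintegral_Ioi_zero_rpow_add_mul_enorm_le hn0 β hf
    _ = ENNReal.ofReal
            (ε * (n : ℝ) ^ (-(1/2 : ℝ) - β.re - δ) * (n : ℝ) ^ ((1/2 : ℝ) + β.re - δ))
          * Φ ^ 2 * eLpNorm (fun x : ℝ => ((1 + x : ℝ) : ℂ) ^ β * f ((n : ℝ) * x)) 2
              (volume.restrict (Ioi 0)) := by
        rw [ENNReal.ofReal_mul (mul_nonneg hε (by positivity))]; ring
    _ = _ := by
        rw [eLpNorm_one_add_rpow_neg_half_sub_sq hδ, ← ENNReal.ofReal_mul (by positivity),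
          mul_assoc ε, ← Real.rpow_add hn0,
          show -(1/2 : ℝ) - β.re - δ + (1/2 + β.re - δ) = -2 * δ by ring]
        congr 2
        ring

/-- If an integral operator `K_e` on `L^{2,-β,n}(0,∞)` has kernel bounded by
`ε_n (n+x)^{-1/2-Re β-δ} (n+y)^{-1/2+Re β-δ}`, then its operator norm is at most
`C ε_n n^{-2δ}` for a constant `C` depending only on `β` and `δ`; in particular, if
`ε_n → 0`, then `‖K_e‖ = o(n^{-δ})` as `n → ∞`. -/
theorem stmt9 (β : ℂ) (δ : ℝ) (hβ : |β.re| < 1/2) (hδ : 0 < δ)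
    (h1 : β.re + δ < 1/2) (h2 : -β.re + δ < 1/2) :
    ∃ C : ℝ, 0 < C ∧ ∀ n : ℕ, 1 ≤ n → ∀ ε : ℝ, 0 ≤ ε → ∀ Ke : ℝ → ℝ → ℂ,
      (∀ x y : ℝ, 0 < x → 0 < y →
        ‖Ke x y‖ ≤ ε * ((n : ℝ) + x) ^ (-(1/2 : ℝ) - β.re - δ)
          * ((n : ℝ) + y) ^ (-(1/2 : ℝ) + β.re - δ)) →
      ∀ f : ℝ → ℂ, AEStronglyMeasurable f (volume.restrict (Ioi (0:ℝ))) →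
        eLpNorm (fun x : ℝ => ((1 + x : ℝ) : ℂ) ^ β *
            ∫ y in Ioi (0:ℝ), Ke ((n : ℝ) * x) y * f y) 2 (volume.restrict (Ioi (0:ℝ)))
          ≤ ENNReal.ofReal (C * ε * (n : ℝ) ^ (-2 * δ)) *
            eLpNorm (fun x : ℝ => ((1 + x : ℝ) : ℂ) ^ β * f ((n : ℝ) * x)) 2
              (volume.restrict (Ioi (0:ℝ))) :=
  stmt9_general β δ hδ
end

section
/- Let p ≥ 1 and suppose (y_{i,j})_{0≤i,j<p} are complex numbers admitting expansions y_{i,j} = Σ_{k=0}^{M} p_k(i,j) n^{-1+2β-k} + o(n^{-1+2β-M}) as n → ∞, where each p_k is a polynomial in (i,j) of total degree at most k and M ≥ p² - p. Then det(y_{i,j}) = c · n^{-p²+2βp}(1 + o(1)) for some constant c independent of n (possibly zero, in which case det(y_{i,j}) = o(n^{-p²+2βp})). -/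
open Filter

open Polynomial


lemma sum_distinct (s : Finset ℕ) : ∑ m ∈ Finset.range s.card, m ≤ ∑ x ∈ s, x := by
  induction s using Finset.strongInduction with
  | _ s ih =>
    rcases s.eq_empty_or_nonempty with h | h
    · simp [h]
    · set m := s.max' h with hm
      have hmem : m ∈ s := s.max'_mem h
      have hcard : (s.erase m).card = s.card - 1 := Finset.card_erase_of_mem hmem
      have hsub : s ⊆ Finset.range (m + 1) :=
        fun x hx => Finset.mem_range.2 (Nat.lt_succ_of_le (Finset.le_max' s x hx))
      have hle : s.card ≤ m + 1 := by
        have := Finset.card_le_card hsub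
        simpa using this
      have hpos : 1 ≤ s.card := Finset.card_pos.2 h
      have h2 := ih (s.erase m) (Finset.erase_ssubset hmem)
      rw [hcard] at h2
      have h3 : ∑ x ∈ s, x = m + ∑ x ∈ s.erase m, x := (Finset.add_sum_erase _ _ hmem).symm
      have h4 : ∑ i ∈ Finset.range s.card, i
          = ∑ i ∈ Finset.range (s.card - 1), i + (s.card - 1) := by
        have h5 : s.card = (s.card - 1) + 1 := by omega
        nth_rewrite 1 [h5]
        rw [Finset.sum_range_succ]
      omega

lemma inj_sum_ge {p : ℕ} (r : Fin p → ℕ) (hr : Function.Injective r) :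
    ∑ m ∈ Finset.range p, m ≤ ∑ i : Fin p, r i := by
  have h1 : ∑ x ∈ Finset.image r Finset.univ, x = ∑ i : Fin p, r i :=
    Finset.sum_image (fun a _ b _ h => hr h)
  have h2 : (Finset.image r Finset.univ).card = p := by
    rw [Finset.card_image_of_injective _ hr, Finset.card_univ, Fintype.card_fin]
  have := sum_distinct (Finset.image r Finset.univ)
  rw [h2] at this
  omega

lemma rowLemma {p : ℕ} (N : ℕ) (w : Matrix (Fin p) (Fin p) (Polynomial ℂ)) (c : Fin p → ℂ)
    (t : ℕ → Fin p → Polynomial ℂ)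
    (hw : ∀ i j, w i j = ∑ a ∈ Finset.range N, (C (c i) * X) ^ a * t a j) :
    (X : Polynomial ℂ) ^ (∑ m ∈ Finset.range p, m) ∣ w.det := by
  classical
  have hw' : w = fun i => ∑ a ∈ Finset.range N, ((C (c i) * X) ^ a) • t a := by
    funext i j
    rw [hw]
    simp [Finset.sum_apply]
  have hdet : w.det = Matrix.detRowAlternating w := rfl
  rw [hdet, hw']
  have expand := (Matrix.detRowAlternating (R := Polynomial ℂ)
      (n := Fin p)).toMultilinearMap.map_sum_finset
      (fun i a => ((C (c i) * X) ^ a) • t a) (fun _ => Finset.range N)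
  simp only [AlternatingMap.coe_multilinearMap] at expand
  rw [expand]
  apply Finset.dvd_sum
  intro r _
  have hsmul := (Matrix.detRowAlternating (R := Polynomial ℂ)
      (n := Fin p)).toMultilinearMap.map_smul_univ
      (fun i => (C (c i) * X) ^ r i) (fun i => t (r i))
  simp only [AlternatingMap.coe_multilinearMap] at hsmul
  rw [hsmul]
  by_cases hinj : Function.Injective r
  · have hprod : (∏ i : Fin p, (C (c i) * X) ^ r i)
        = (∏ i : Fin p, C (c i) ^ r i) * X ^ (∑ i : Fin p, r i) := by
      simp only [mul_pow, Finset.prod_mul_distrib, Finset.prod_pow_eq_pow_sum]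
    rw [hprod, smul_eq_mul]
    exact Dvd.dvd.mul_right (Dvd.dvd.mul_left (pow_dvd_pow X (inj_sum_ge r hinj)) _) _
  · obtain ⟨i, i', heq, hne⟩ := Function.not_injective_iff.1 hinj
    have hzero : Matrix.detRowAlternating (fun i => t (r i)) = 0 :=
      AlternatingMap.map_eq_zero_of_eq _ _ (by rw [heq]) hne
    rw [hzero, smul_zero]
    exact dvd_zero _


lemma fin2_decomp (d : Fin 2 →₀ ℕ) :
    d = Finsupp.single 0 (d 0) + Finsupp.single 1 (d 1) := by
  ext x
  fin_cases x <;> simp [Finsupp.single_apply]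

lemma fin2_sum (d : Fin 2 →₀ ℕ) : (d.sum fun _ e => e) = d 0 + d 1 := by
  rw [Finsupp.sum_fintype _ _ (fun _ => rfl), Fin.sum_univ_two]

lemma happ0 (a b : ℕ) : (Finsupp.single 0 a + Finsupp.single 1 b : Fin 2 →₀ ℕ) 0 = a := by
  simp [Finsupp.add_apply, Finsupp.single_apply]

lemma happ1 (a b : ℕ) : (Finsupp.single 0 a + Finsupp.single 1 b : Fin 2 →₀ ℕ) 1 = b := by
  simp [Finsupp.add_apply, Finsupp.single_apply]

lemma eval_grid (M : ℕ) (q : MvPolynomial (Fin 2) ℂ) (hq : q.totalDegree ≤ M) (x y : ℂ) :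
    MvPolynomial.eval (fun m : Fin 2 => if m = 0 then x else y) q
      = ∑ a ∈ Finset.range (M + 1), ∑ b ∈ Finset.range (M + 1),
          MvPolynomial.coeff (Finsupp.single 0 a + Finsupp.single 1 b) q * x ^ a * y ^ b := by
  classical
  set φ : ℕ × ℕ → (Fin 2 →₀ ℕ) :=
    fun ab => Finsupp.single 0 ab.1 + Finsupp.single 1 ab.2 with hφ
  set g : (Fin 2 →₀ ℕ) → ℂ := fun d => MvPolynomial.coeff d q * x ^ d 0 * y ^ d 1 with hg
  set grid := (Finset.range (M + 1)) ×ˢ (Finset.range (M + 1)) with hgrid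
  have hL : MvPolynomial.eval (fun m : Fin 2 => if m = 0 then x else y) q
      = ∑ d ∈ q.support, g d := by
    rw [MvPolynomial.eval_eq']
    refine Finset.sum_congr rfl fun d _ => ?_
    rw [hg]
    simp [Fin.prod_univ_two, mul_assoc]
  have hRsum : ∀ ab : ℕ × ℕ, g (φ ab) = MvPolynomial.coeff (φ ab) q * x ^ ab.1 * y ^ ab.2 := by
    intro ab
    rw [hg, hφ]
    simp only [happ0, happ1]
  have hinj' : ∀ ab ∈ grid, ∀ ab' ∈ grid, φ ab = φ ab' → ab = ab' := by
    intro ab _ ab' _ h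
    have h0 : ab.1 = ab'.1 := by
      have := congrArg (fun d : Fin 2 →₀ ℕ => d 0) h
      simpa [hφ, happ0] using this
    have h1 : ab.2 = ab'.2 := by
      have := congrArg (fun d : Fin 2 →₀ ℕ => d 1) h
      simpa [hφ, happ1] using this
    exact Prod.ext h0 h1
  have hR : ∑ d ∈ grid.image φ, g d
      = ∑ a ∈ Finset.range (M + 1), ∑ b ∈ Finset.range (M + 1),
          MvPolynomial.coeff (Finsupp.single 0 a + Finsupp.single 1 b) q * x ^ a * y ^ b := by
    rw [Finset.sum_image hinj', ← Finset.sum_product']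
    exact Finset.sum_congr rfl fun ab _ => hRsum ab
  rw [hL, ← hR]
  refine Finset.sum_subset ?_ ?_
  · intro d hd
    have hdle := MvPolynomial.le_totalDegree hd
    have hsum : (d.sum fun _ e => e) = d 0 + d 1 := fin2_sum d
    rw [hsum] at hdle
    refine Finset.mem_image.2 ⟨(d 0, d 1), ?_, (fin2_decomp d).symm⟩
    simp only [hgrid, Finset.mem_product, Finset.mem_range]
    omega
  · intro d _ hd
    rw [hg]
    simp [MvPolynomial.notMem_support_iff.1 hd]

lemma keyDvd (p M : ℕ) (P : ℕ → MvPolynomial (Fin 2) ℂ)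
    (hdeg : ∀ k ≤ M, (P k).totalDegree ≤ k) :
    (X : Polynomial ℂ) ^ (p ^ 2 - p) ∣
      Matrix.det (Matrix.of fun i j : Fin p =>
        ∑ k ∈ Finset.range (M + 1),
          C (MvPolynomial.eval
            (fun m : Fin 2 => if m = 0 then ((i : ℕ) : ℂ) else ((j : ℕ) : ℂ)) (P k))
            * X ^ k) := by
  classical
  set T := ∑ m ∈ Finset.range p, m with hT
  have hps : p ^ 2 - p = T + T := by
    have h2 := Finset.sum_range_id_mul_two p
    rcases p with _ | m
    · simp [hT]
    · have h2' : T * 2 = (m + 1) * m := by simpa using h2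
      have h3 : (m + 1) ^ 2 = (m + 1) * m + (m + 1) := by ring
      omega
  rw [hps, pow_add]
  set g : ℕ → ℕ → Polynomial ℂ := fun a b =>
    ∑ k ∈ Finset.range (M + 1),
      C (MvPolynomial.coeff (Finsupp.single 0 a + Finsupp.single 1 b) (P k))
        * X ^ (k - (a + b)) with hgdef
  set t : ℕ → Fin p → Polynomial ℂ :=
    fun a => fun j => ∑ b ∈ Finset.range (M + 1), (C ((j : ℕ) : ℂ) * X) ^ b * g a b with htdef
  have hentry : ∀ i j : Fin p,
      (∑ k ∈ Finset.range (M + 1),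
        C (MvPolynomial.eval
          (fun m : Fin 2 => if m = 0 then ((i : ℕ) : ℂ) else ((j : ℕ) : ℂ)) (P k)) * X ^ k)
      = ∑ a ∈ Finset.range (M + 1), (C ((i : ℕ) : ℂ) * X) ^ a * t a j := by
    intro i j
    set xi : ℂ := ((i : ℕ) : ℂ)
    set yj : ℂ := ((j : ℕ) : ℂ)
    have hterm : ∀ k ∈ Finset.range (M + 1), ∀ a ∈ Finset.range (M + 1),
        ∀ b ∈ Finset.range (M + 1),
        (C xi * X) ^ a * ((C yj * X) ^ b *
          (C (MvPolynomial.coeff (Finsupp.single 0 a + Finsupp.single 1 b) (P k))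
            * X ^ (k - (a + b))))
        = C (MvPolynomial.coeff (Finsupp.single 0 a + Finsupp.single 1 b) (P k)
              * xi ^ a * yj ^ b) * X ^ k := by
      intro k hk a _ b _
      have hkM : k ≤ M := Nat.lt_succ_iff.1 (Finset.mem_range.1 hk)
      by_cases hab : a + b ≤ k
      · have hX : (X : Polynomial ℂ) ^ a * X ^ b * X ^ (k - (a + b)) = X ^ k := by
          rw [← pow_add, ← pow_add]
          congr 1
          omega
        calc (C xi * X) ^ a * ((C yj * X) ^ b *
              (C (MvPolynomial.coeff (Finsupp.single 0 a + Finsupp.single 1 b) (P k))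
                * X ^ (k - (a + b))))
            = (C xi ^ a * C yj ^ b *
                C (MvPolynomial.coeff (Finsupp.single 0 a + Finsupp.single 1 b) (P k)))
              * ((X : Polynomial ℂ) ^ a * X ^ b * X ^ (k - (a + b))) := by
              simp only [mul_pow]; ring
          _ = _ := by
              rw [hX]
              simp only [← C_pow, ← C_mul]
              ring_nf
      · have hco : MvPolynomial.coeff (Finsupp.single 0 a + Finsupp.single 1 b) (P k) = 0 := by
          apply MvPolynomial.coeff_eq_zero_of_totalDegree_lt
          have hsum : ((Finsupp.single 0 a + Finsupp.single 1 b : Fin 2 →₀ ℕ).sum fun _ e => e)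
              = a + b := by rw [fin2_sum, happ0, happ1]
          have h4 := hdeg k hkM
          calc (P k).totalDegree ≤ k := h4
            _ < a + b := by omega
            _ = _ := by rw [← hsum]; rfl
        simp [hco]
    have hRHS : ∑ a ∈ Finset.range (M + 1), (C xi * X) ^ a * t a j
        = ∑ k ∈ Finset.range (M + 1), ∑ a ∈ Finset.range (M + 1), ∑ b ∈ Finset.range (M + 1),
            C (MvPolynomial.coeff (Finsupp.single 0 a + Finsupp.single 1 b) (P k)
              * xi ^ a * yj ^ b) * X ^ k := by
      rw [htdef]
      simp only [hgdef, Finset.mul_sum]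
      have step1 : ∑ a ∈ Finset.range (M + 1), ∑ b ∈ Finset.range (M + 1),
            ∑ k ∈ Finset.range (M + 1),
            (C xi * X) ^ a * ((C yj * X) ^ b *
              (C (MvPolynomial.coeff (Finsupp.single 0 a + Finsupp.single 1 b) (P k))
                * X ^ (k - (a + b))))
          = ∑ a ∈ Finset.range (M + 1), ∑ b ∈ Finset.range (M + 1),
            ∑ k ∈ Finset.range (M + 1),
            C (MvPolynomial.coeff (Finsupp.single 0 a + Finsupp.single 1 b) (P k)
              * xi ^ a * yj ^ b) * X ^ k := by
        refine Finset.sum_congr rfl fun a ha => ?_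
        refine Finset.sum_congr rfl fun b hb => ?_
        refine Finset.sum_congr rfl fun k hk => ?_
        exact hterm k hk a ha b hb
      rw [step1]
      calc ∑ a ∈ Finset.range (M + 1), ∑ b ∈ Finset.range (M + 1),
            ∑ k ∈ Finset.range (M + 1),
            C (MvPolynomial.coeff (Finsupp.single 0 a + Finsupp.single 1 b) (P k)
              * xi ^ a * yj ^ b) * X ^ k
          = ∑ a ∈ Finset.range (M + 1), ∑ k ∈ Finset.range (M + 1),
            ∑ b ∈ Finset.range (M + 1),
            C (MvPolynomial.coeff (Finsupp.single 0 a + Finsupp.single 1 b) (P k)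
              * xi ^ a * yj ^ b) * X ^ k :=
            Finset.sum_congr rfl fun a _ => Finset.sum_comm
        _ = _ := Finset.sum_comm
    rw [hRHS]
    refine Finset.sum_congr rfl fun k hk => ?_
    have hkM : k ≤ M := by simp at hk; omega
    rw [eval_grid M (P k) (le_trans (hdeg k hkM) hkM)]
    simp only [map_sum, Finset.sum_mul]
  -- expand determinant over rows
  have hw' : (Matrix.of fun i j : Fin p =>
      ∑ k ∈ Finset.range (M + 1),
        C (MvPolynomial.eval
          (fun m : Fin 2 => if m = 0 then ((i : ℕ) : ℂ) else ((j : ℕ) : ℂ)) (P k)) * X ^ k)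
      = Matrix.of (fun i : Fin p => ∑ a ∈ Finset.range (M + 1), ((C ((i : ℕ) : ℂ) * X) ^ a) • t a) := by
    funext i j
    rw [Matrix.of_apply, hentry i j]
    simp [Finset.sum_apply]
  have hdet : Matrix.det (Matrix.of fun i j : Fin p =>
      ∑ k ∈ Finset.range (M + 1),
        C (MvPolynomial.eval
          (fun m : Fin 2 => if m = 0 then ((i : ℕ) : ℂ) else ((j : ℕ) : ℂ)) (P k)) * X ^ k)
      = Matrix.detRowAlternating (fun i : Fin p =>
          ∑ a ∈ Finset.range (M + 1), ((C ((i : ℕ) : ℂ) * X) ^ a) • t a) := by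
    rw [hw']
    rfl
  rw [hdet]
  have expand := (Matrix.detRowAlternating (R := Polynomial ℂ)
      (n := Fin p)).toMultilinearMap.map_sum_finset
      (fun i a => ((C ((i : ℕ) : ℂ) * X) ^ a) • t a) (fun _ => Finset.range (M + 1))
  simp only [AlternatingMap.coe_multilinearMap] at expand
  rw [expand]
  apply Finset.dvd_sum
  intro r _
  have hsmul := (Matrix.detRowAlternating (R := Polynomial ℂ)
      (n := Fin p)).toMultilinearMap.map_smul_univ
      (fun i => (C ((i : ℕ) : ℂ) * X) ^ r i) (fun i => t (r i))
  simp only [AlternatingMap.coe_multilinearMap] at hsmul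
  rw [hsmul]
  by_cases hinj : Function.Injective r
  · -- divisibility of the inner determinant via columns
    have hinner : (X : Polynomial ℂ) ^ T ∣ Matrix.detRowAlternating (fun i => t (r i)) := by
      have h1 : Matrix.detRowAlternating (fun i => t (r i))
          = Matrix.det (Matrix.of fun i j : Fin p => t (r i) j) := rfl
      rw [h1, ← Matrix.det_transpose]
      exact rowLemma (M + 1) _ (fun j => ((j : ℕ) : ℂ)) (fun b i => g (r i) b)
        (fun i j => rfl)
    obtain ⟨Q2, hQ2⟩ := hinner
    have hprod : (∏ i : Fin p, (C ((i : ℕ) : ℂ) * X) ^ r i)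
        = (∏ i : Fin p, C ((i : ℕ) : ℂ) ^ r i) * X ^ (∑ i : Fin p, r i) := by
      simp only [mul_pow, Finset.prod_mul_distrib, Finset.prod_pow_eq_pow_sum]
    rw [hQ2, hprod, smul_eq_mul]
    exact mul_dvd_mul (Dvd.dvd.mul_left (pow_dvd_pow X (inj_sum_ge r hinj)) _)
      (dvd_mul_right _ _)
  · obtain ⟨i, i', heq, hne⟩ := Function.not_injective_iff.1 hinj
    have hzero : Matrix.detRowAlternating (fun i => t (r i)) = 0 :=
      AlternatingMap.map_eq_zero_of_eq _ _ (by rw [heq]) hne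
    rw [hzero, smul_zero]
    exact dvd_zero _

lemma cpow_ne_zero' {x : ℂ} (hx : x ≠ 0) (y : ℂ) : x ^ y ≠ 0 := by
  rw [Complex.cpow_def_of_ne_zero hx]
  exact Complex.exp_ne_zero _

lemma cpow_sum' {ι : Type*} (s : Finset ι) {x : ℂ} (hx : x ≠ 0) (f : ι → ℂ) :
    x ^ (∑ i ∈ s, f i) = ∏ i ∈ s, x ^ f i := by
  classical
  induction s using Finset.cons_induction with
  | empty => simp
  | cons a s ha ih => rw [Finset.sum_cons, Complex.cpow_add _ _ hx, Finset.prod_cons, ih]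

lemma inv_tendsto_zero : Filter.Tendsto (fun n : ℕ => ((n : ℂ))⁻¹) Filter.atTop (nhds 0) := by
  have h := tendsto_inv_atTop_nhds_zero_nat (𝕜 := ℝ)
  have h2 := (Complex.continuous_ofReal.tendsto 0).comp h
  simp only [Function.comp_def, Complex.ofReal_inv, Complex.ofReal_natCast,
    Complex.ofReal_zero] at h2
  exact h2

/-- If the entries `y_{i,j}` (depending on `n`) admit expansions
`y_{i,j} = Σ_{k=0}^M p_k(i,j) n^{-1+2β-k} + o(n^{-1+2β-M})` with `p_k` a polynomial of total
degree at most `k` and `M ≥ p² - p`, then `det(y_{i,j}) = c · n^{-p²+2βp}(1 + o(1))` for some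
constant `c` independent of `n` (possibly zero, in which case `det = o(n^{-p²+2βp})`);
equivalently, `det(y_{i,j}) / n^{-p²+2βp}` converges. -/
theorem stmt13 (p : ℕ) (hp : 1 ≤ p) (β : ℂ) (M : ℕ) (hM : p ^ 2 - p ≤ M)
    (P : ℕ → MvPolynomial (Fin 2) ℂ) (hdeg : ∀ k ≤ M, (P k).totalDegree ≤ k)
    (y : ℕ → Matrix (Fin p) (Fin p) ℂ)
    (hy : ∀ i j : Fin p, ∃ e : ℕ → ℂ,
      (∀ n : ℕ, 1 ≤ n → y n i j =
        (∑ k ∈ Finset.range (M + 1),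
          MvPolynomial.eval (fun m : Fin 2 => if m = 0 then ((i : ℕ) : ℂ) else ((j : ℕ) : ℂ))
            (P k) * (n : ℂ) ^ (-1 + 2 * β - (k : ℂ))) + e n) ∧
      Tendsto (fun n : ℕ => e n / (n : ℂ) ^ (-1 + 2 * β - (M : ℂ))) atTop (nhds 0)) :
    ∃ c : ℂ, Tendsto (fun n : ℕ => (y n).det / (n : ℂ) ^ (-(p : ℂ) ^ 2 + 2 * β * (p : ℂ)))
      atTop (nhds c) := by
  classical
  choose e he hlim using hy
  obtain ⟨Q, hQ⟩ := keyDvd p M P hdeg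
  set E : ℂ := -(p : ℂ) ^ 2 + 2 * β * (p : ℂ) with hE
  set S : Matrix (Fin p) (Fin p) (Polynomial ℂ) := Matrix.of fun i j : Fin p =>
        ∑ k ∈ Finset.range (M + 1),
          C (MvPolynomial.eval
            (fun m : Fin 2 => if m = 0 then ((i : ℕ) : ℂ) else ((j : ℕ) : ℂ)) (P k))
            * X ^ k with hS
  have hppow : p ≤ p ^ 2 := by nlinarith
  have hcast : ((p ^ 2 - p : ℕ) : ℂ) = (p : ℂ) ^ 2 - (p : ℂ) := by
    push_cast [Nat.cast_sub hppow]; ring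
  have hk' : ∀ n : ℕ, (n : ℂ) ≠ 0 → ∀ k : ℕ, (n : ℂ) ^ (-1 + 2 * β - (k : ℂ))
      = (n : ℂ) ^ (-1 + 2 * β) * ((n : ℂ)⁻¹) ^ k := by
    intro n hn0 k
    rw [sub_eq_add_neg, Complex.cpow_add _ _ hn0, Complex.cpow_neg,
      Complex.cpow_natCast, inv_pow]
  set mrow : ℕ → Fin p → Fin p → ℂ := fun n i j =>
    ∑ k ∈ Finset.range (M + 1),
      MvPolynomial.eval (fun m : Fin 2 => if m = 0 then ((i : ℕ) : ℂ) else ((j : ℕ) : ℂ))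
        (P k) * (n : ℂ) ^ (-1 + 2 * β - (k : ℂ)) with hmrow
  set erow : ℕ → Fin p → Fin p → ℂ := fun n i j => e i j n with herow
  have hsplit : ∀ n : ℕ, 1 ≤ n → (y n).det
      = ∑ s : Finset (Fin p), Matrix.detRowAlternating (s.piecewise (erow n) (mrow n)) := by
    intro n hn
    have hyeq : (y n : Matrix (Fin p) (Fin p) ℂ) = erow n + mrow n := by
      funext i j
      exact (he i j n hn).trans (add_comm _ _)
    have h1 : (y n).det = Matrix.detRowAlternating (erow n + mrow n) := by rw [hyeq]; rfl
    rw [h1]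
    have h2 := (Matrix.detRowAlternating (R := ℂ)
      (n := Fin p)).toMultilinearMap.map_add_univ (erow n) (mrow n)
    simp only [AlternatingMap.coe_multilinearMap] at h2
    exact h2
  have hterm : ∀ s : Finset (Fin p),
      Tendsto (fun n : ℕ =>
          Matrix.detRowAlternating (s.piecewise (erow n) (mrow n)) / (n : ℂ) ^ E)
        atTop (nhds (if s = ∅ then Q.eval 0 else 0)) := by
    intro s
    rcases eq_or_ne s ∅ with hs | hs
    · subst hs
      rw [if_pos rfl]
      have hmain : ∀ n : ℕ, 1 ≤ n →
          Matrix.detRowAlternating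
            ((∅ : Finset (Fin p)).piecewise (erow n) (mrow n)) / (n : ℂ) ^ E
          = Q.eval ((n : ℂ))⁻¹ := by
        intro n hn
        have hn0 : (n : ℂ) ≠ 0 := Nat.cast_ne_zero.2 (by omega)
        have hip : ((∅ : Finset (Fin p)).piecewise (erow n) (mrow n)) = mrow n :=
          Finset.piecewise_empty _ _
        rw [hip]
        have hmS : (mrow n : Matrix (Fin p) (Fin p) ℂ)
            = ((n : ℂ) ^ (-1 + 2 * β)) • (S.map (Polynomial.evalRingHom ((n : ℂ))⁻¹)) := by
          funext i j
          simp only [hmrow, Matrix.smul_apply, Matrix.map_apply, hS, Matrix.of_apply,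
            Polynomial.eval_finset_sum, coe_evalRingHom, eval_mul, eval_pow, eval_C, eval_X,
            smul_eq_mul, Finset.mul_sum]
          refine Finset.sum_congr rfl fun k _ => ?_
          rw [hk' n hn0 k]
          ring
        have hdet1 : Matrix.detRowAlternating (mrow n) = Matrix.det (mrow n) := rfl
        rw [hdet1, hmS, Matrix.det_smul]
        have hmapdet : (S.map ⇑(Polynomial.evalRingHom ((n : ℂ))⁻¹)).det
            = eval ((n : ℂ))⁻¹ S.det := by
          rw [← RingHom.mapMatrix_apply]
          exact (RingHom.map_det _ _).symm
        rw [hmapdet, hQ]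
        simp only [coe_evalRingHom, eval_mul, eval_pow, eval_X, Fintype.card_fin]
        have hC : (n : ℂ) ^ E ≠ 0 := cpow_ne_zero' hn0 E
        have hscal : ((n : ℂ) ^ (-1 + 2 * β)) ^ p * ((n : ℂ)⁻¹) ^ (p ^ 2 - p)
            = (n : ℂ) ^ E := by
          rw [← Complex.cpow_nat_mul (n : ℂ) p (-1 + 2 * β), inv_pow,
            ← Complex.cpow_natCast (n : ℂ) (p ^ 2 - p), ← Complex.cpow_neg,
            ← Complex.cpow_add _ _ hn0]
          congr 1
          rw [hE, hcast]
          ring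
        rw [show ((n : ℂ) ^ (-1 + 2 * β)) ^ p
              * (((n : ℂ)⁻¹) ^ (p ^ 2 - p) * Q.eval ((n : ℂ))⁻¹)
            = (((n : ℂ) ^ (-1 + 2 * β)) ^ p * ((n : ℂ)⁻¹) ^ (p ^ 2 - p))
              * Q.eval ((n : ℂ))⁻¹ from by ring, hscal]
        exact mul_div_cancel_left₀ _ hC
      have hQcont : Tendsto (fun n : ℕ => Q.eval ((n : ℂ))⁻¹) atTop (nhds (Q.eval 0)) :=
        ((Polynomial.continuous Q).tendsto 0).comp inv_tendsto_zero
      refine Tendsto.congr' ?_ hQcont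
      filter_upwards [eventually_ge_atTop 1] with n hn
      exact (hmain n hn).symm
    · rw [if_neg hs]
      obtain ⟨r0, hr0⟩ := Finset.nonempty_iff_ne_empty.mpr hs
      have hcard1 : 1 ≤ s.card := Finset.card_pos.2 ⟨r0, hr0⟩
      set d : ℕ := M * s.card - (p ^ 2 - p) with hd
      have hdle : p ^ 2 - p ≤ M * s.card :=
        le_trans hM (Nat.le_mul_of_pos_right M (by omega))
      have hdcast : ((d : ℕ) : ℂ) = (M : ℂ) * (s.card : ℂ) - ((p : ℂ) ^ 2 - (p : ℂ)) := by
        rw [hd, Nat.cast_sub hdle, hcast]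
        push_cast
        ring
      set w : Fin p → ℂ := fun r => (-1 + 2 * β) - (if r ∈ s then (M : ℂ) else 0) with hw
      have hdetp : ∀ n : ℕ, Matrix.detRowAlternating (s.piecewise (erow n) (mrow n))
          = ∑ σ : Equiv.Perm (Fin p), ((Equiv.Perm.sign σ : ℤ) : ℂ) *
              ∏ i : Fin p, (s.piecewise (erow n) (mrow n)) (σ i) i := by
        intro n
        rw [show Matrix.detRowAlternating (s.piecewise (erow n) (mrow n))
            = Matrix.det (Matrix.of (s.piecewise (erow n) (mrow n))) from rfl, Matrix.det_apply]
        refine Finset.sum_congr rfl fun σ _ => ?_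
        simp only [Units.smul_def, zsmul_eq_mul, Matrix.of_apply]
      have hperm : ∀ σ : Equiv.Perm (Fin p),
          Tendsto (fun n : ℕ =>
              (∏ i : Fin p, (s.piecewise (erow n) (mrow n)) (σ i) i) / (n : ℂ) ^ E)
            atTop (nhds 0) := by
        intro σ
        set F : Fin p → ℕ → ℂ := fun i n =>
          (s.piecewise (erow n) (mrow n)) (σ i) i / (n : ℂ) ^ (w (σ i)) with hF
        set L : Fin p → ℂ := fun i => if σ i ∈ s then 0 else
          ∑ k ∈ Finset.range (M + 1),
            MvPolynomial.eval
              (fun m : Fin 2 => if m = 0 then (((σ i) : ℕ) : ℂ) else ((i : ℕ) : ℂ))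
              (P k) * (0 : ℂ) ^ k with hL
        have hFlim : ∀ i : Fin p, Tendsto (F i) atTop (nhds (L i)) := by
          intro i
          by_cases hσ : σ i ∈ s
          · have hFeq : F i = fun n : ℕ => e (σ i) i n / (n : ℂ) ^ (-1 + 2 * β - (M : ℂ)) := by
              funext n
              simp only [hF, hw]
              rw [Finset.piecewise_eq_of_mem _ _ _ hσ, if_pos hσ]
            rw [hFeq]
            have hLi : L i = 0 := by simp only [hL, if_pos hσ]
            rw [hLi]
            exact hlim (σ i) i
          · have hFeq : ∀ n : ℕ, 1 ≤ n → F i n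
                = ∑ k ∈ Finset.range (M + 1),
                    MvPolynomial.eval
                      (fun m : Fin 2 => if m = 0 then (((σ i) : ℕ) : ℂ) else ((i : ℕ) : ℂ))
                      (P k) * ((n : ℂ)⁻¹) ^ k := by
              intro n hn
              have hn0 : (n : ℂ) ≠ 0 := Nat.cast_ne_zero.2 (by omega)
              have hA : (n : ℂ) ^ (-1 + 2 * β) ≠ 0 := cpow_ne_zero' hn0 _
              simp only [hF, hw]
              rw [Finset.piecewise_eq_of_notMem _ _ _ hσ, if_neg hσ, sub_zero]
              simp only [hmrow]
              rw [Finset.sum_div]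
              refine Finset.sum_congr rfl fun k _ => ?_
              rw [hk' n hn0 k, mul_comm ((n : ℂ) ^ (-1 + 2 * β)) (((n : ℂ)⁻¹) ^ k),
                ← mul_assoc, mul_div_assoc, div_self hA, mul_one]
            have h2 : Tendsto (fun n : ℕ => ∑ k ∈ Finset.range (M + 1),
                MvPolynomial.eval
                  (fun m : Fin 2 => if m = 0 then (((σ i) : ℕ) : ℂ) else ((i : ℕ) : ℂ))
                  (P k) * ((n : ℂ)⁻¹) ^ k) atTop
                (nhds (∑ k ∈ Finset.range (M + 1),
                  MvPolynomial.eval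
                    (fun m : Fin 2 => if m = 0 then (((σ i) : ℕ) : ℂ) else ((i : ℕ) : ℂ))
                    (P k) * (0 : ℂ) ^ k)) :=
              tendsto_finset_sum _ (fun k _ => (inv_tendsto_zero.pow k).const_mul _)
            have hLi : L i = ∑ k ∈ Finset.range (M + 1),
                MvPolynomial.eval
                  (fun m : Fin 2 => if m = 0 then (((σ i) : ℕ) : ℂ) else ((i : ℕ) : ℂ))
                  (P k) * (0 : ℂ) ^ k := by simp only [hL, if_neg hσ]
            rw [hLi]
            refine Tendsto.congr' ?_ h2
            filter_upwards [eventually_ge_atTop 1] with n hn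
            exact (hFeq n hn).symm
        have hev : (fun n : ℕ =>
              (∏ i : Fin p, (s.piecewise (erow n) (mrow n)) (σ i) i) / (n : ℂ) ^ E)
            =ᶠ[atTop] (fun n : ℕ => (∏ i : Fin p, F i n) * ((n : ℂ)⁻¹) ^ d) := by
          filter_upwards [eventually_ge_atTop 1] with n hn
          have hn0 : (n : ℂ) ≠ 0 := Nat.cast_ne_zero.2 (by omega)
          have hC : (n : ℂ) ^ E ≠ 0 := cpow_ne_zero' hn0 E
          have h1 : ∀ i : Fin p, (s.piecewise (erow n) (mrow n)) (σ i) i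
              = F i n * (n : ℂ) ^ (w (σ i)) := by
            intro i
            simp only [hF]
            exact (div_mul_cancel₀ _ (cpow_ne_zero' hn0 _)).symm
          have hsw : ∑ i : Fin p, w i = E + (-((d : ℕ) : ℂ)) := by
            simp only [hw]
            rw [Finset.sum_sub_distrib, Finset.sum_const]
            have hite : ∑ i : Fin p, (if i ∈ s then (M : ℂ) else 0) = ∑ i ∈ s, (M : ℂ) := by
              simp
            rw [hite, Finset.sum_const, hdcast, hE]
            simp only [Finset.card_univ, Fintype.card_fin, nsmul_eq_mul]
            ring
          calc (∏ i : Fin p, (s.piecewise (erow n) (mrow n)) (σ i) i) / (n : ℂ) ^ E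
              = (∏ i : Fin p, F i n * (n : ℂ) ^ (w (σ i))) / (n : ℂ) ^ E := by
                rw [Finset.prod_congr rfl fun i _ => h1 i]
            _ = ((∏ i : Fin p, F i n) * ∏ i : Fin p, (n : ℂ) ^ (w (σ i))) / (n : ℂ) ^ E := by
                rw [Finset.prod_mul_distrib]
            _ = ((∏ i : Fin p, F i n) * (n : ℂ) ^ (∑ i : Fin p, w i)) / (n : ℂ) ^ E := by
                rw [Equiv.prod_comp σ (fun r => (n : ℂ) ^ (w r)),
                  ← cpow_sum' Finset.univ hn0 w]
            _ = (∏ i : Fin p, F i n) * ((n : ℂ)⁻¹) ^ d := by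
                rw [hsw, Complex.cpow_add _ _ hn0, Complex.cpow_neg, Complex.cpow_natCast,
                  ← inv_pow]
                rw [show (∏ i : Fin p, F i n) * ((n : ℂ) ^ E * ((n : ℂ)⁻¹) ^ d)
                    = ((∏ i : Fin p, F i n) * ((n : ℂ)⁻¹) ^ d) * (n : ℂ) ^ E from by ring]
                exact mul_div_cancel_right₀ _ hC
        have hlimprod : Tendsto (fun n : ℕ => (∏ i : Fin p, F i n) * ((n : ℂ)⁻¹) ^ d)
            atTop (nhds ((∏ i : Fin p, L i) * (0 : ℂ) ^ d)) :=
          (tendsto_finset_prod _ (fun i _ => hFlim i)).mul (inv_tendsto_zero.pow d)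
        have hzero : (∏ i : Fin p, L i) * (0 : ℂ) ^ d = 0 := by
          have hi0 : L (σ.symm r0) = 0 := by
            simp only [hL, Equiv.apply_symm_apply, if_pos hr0]
          rw [Finset.prod_eq_zero (Finset.mem_univ (σ.symm r0)) hi0, zero_mul]
        rw [hzero] at hlimprod
        exact Tendsto.congr' hev.symm hlimprod
      have heq2 : ∀ n : ℕ,
          Matrix.detRowAlternating (s.piecewise (erow n) (mrow n)) / (n : ℂ) ^ E
          = ∑ σ : Equiv.Perm (Fin p), ((Equiv.Perm.sign σ : ℤ) : ℂ) *
              ((∏ i : Fin p, (s.piecewise (erow n) (mrow n)) (σ i) i) / (n : ℂ) ^ E) := by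
        intro n
        rw [hdetp n, Finset.sum_div]
        exact Finset.sum_congr rfl fun σ _ => mul_div_assoc _ _ _
      have h3 := tendsto_finset_sum (Finset.univ : Finset (Equiv.Perm (Fin p)))
        (fun σ _ => (hperm σ).const_mul (((Equiv.Perm.sign σ : ℤ) : ℂ)))
      rw [show (fun n : ℕ =>
          Matrix.detRowAlternating (s.piecewise (erow n) (mrow n)) / (n : ℂ) ^ E)
          = fun n : ℕ => ∑ σ : Equiv.Perm (Fin p), ((Equiv.Perm.sign σ : ℤ) : ℂ) *
              ((∏ i : Fin p, (s.piecewise (erow n) (mrow n)) (σ i) i) / (n : ℂ) ^ E)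
          from funext heq2]
      simpa using h3
  refine ⟨∑ s : Finset (Fin p), if s = ∅ then Q.eval 0 else 0, ?_⟩
  have hall := tendsto_finset_sum (Finset.univ : Finset (Finset (Fin p)))
    (fun s _ => hterm s)
  refine Tendsto.congr' ?_ hall
  filter_upwards [eventually_ge_atTop 1] with n hn
  rw [hsplit n hn, Finset.sum_div]
end

section
/- Suppose h is analytic on the closed unit disk |z| ≤ 1 and satisfies |h(z)| ≤ |Re z|^{-c} there for some constant c > 0. Then for each 0 < ρ < 1 there is a constant A depending only on c and ρ such that |h(z)| ≤ A for all |z| ≤ ρ. -/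
/-!
On the unit circle `1 + w² = w (w̄ + w) = 2 w Re w`, so the weight `φ(w) = ((1 + w²)/2)^c`,
holomorphic on the open disk since `Re (1 + w²) ≥ 1 - |w|² > 0` there, has modulus exactly
`|Re w|^c` on the boundary. Hence `h φ` is bounded by `1` on the circle, and by the maximum
modulus principle on the whole disk. On `|z| ≤ ρ` we have `|φ(z)| ≥ ((1 - ρ²)/2)^c`, which gives
`|h(z)| ≤ ((1 - ρ²)/2)^(-c)`.
-/

open Complex Metric

lemma one_sub_norm_sq_le_re_one_add_sq (z : ℂ) : 1 - ‖z‖ ^ 2 ≤ (1 + z ^ 2).re := by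
  rw [Complex.sq_norm, Complex.normSq_apply]
  simp only [add_re, one_re, sq, mul_re]
  nlinarith [mul_self_nonneg z.re]

lemma norm_one_add_sq_of_norm_eq_one {z : ℂ} (hz : ‖z‖ = 1) : ‖1 + z ^ 2‖ = 2 * |z.re| := by
  have hconj : 1 + z ^ 2 = z * (2 * z.re : ℝ) := by
    rw [← Complex.add_conj, mul_add, Complex.mul_conj', hz]
    push_cast
    ring
  rw [hconj, norm_mul, hz, Complex.norm_real, Real.norm_eq_abs, abs_mul, abs_two, one_mul]

noncomputable def diskWeight (c : ℝ) (w : ℂ) : ℂ := ((1 + w ^ 2) / 2) ^ (c : ℂ)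

lemma norm_diskWeight (c : ℝ) (w : ℂ) : ‖diskWeight c w‖ = ‖(1 + w ^ 2) / 2‖ ^ c :=
  Complex.norm_cpow_real _ _

lemma norm_diskWeight_of_norm_eq_one (c : ℝ) {w : ℂ} (hw : ‖w‖ = 1) :
    ‖diskWeight c w‖ = |w.re| ^ c := by
  rw [norm_diskWeight, norm_div, norm_one_add_sq_of_norm_eq_one hw, Complex.norm_two,
    mul_div_cancel_left₀ _ two_ne_zero]

lemma re_div_two_one_add_sq_nonneg {w : ℂ} (hw : ‖w‖ ≤ 1) : 0 ≤ ((1 + w ^ 2) / 2).re := by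
  have := one_sub_norm_sq_le_re_one_add_sq w
  rw [Complex.div_ofNat_re]
  nlinarith [norm_nonneg w]

lemma re_div_two_one_add_sq_pos {w : ℂ} (hw : ‖w‖ < 1) : 0 < ((1 + w ^ 2) / 2).re := by
  have := one_sub_norm_sq_le_re_one_add_sq w
  rw [Complex.div_ofNat_re]
  nlinarith [norm_nonneg w]

lemma diffContOnCl_diskWeight {c : ℝ} (hc : 0 < c) :
    DiffContOnCl ℂ (diskWeight c) (ball 0 1) where
  differentiableOn w hw := by
    have hre := re_div_two_one_add_sq_pos (mem_ball_zero_iff.mp hw)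
    have hbase : DifferentiableAt ℂ (fun w : ℂ => (1 + w ^ 2) / 2) w := by fun_prop
    exact (hbase.cpow (differentiableAt_const _) (Or.inl hre)).differentiableWithinAt
  continuousOn := by
    rw [closure_ball _ one_ne_zero]
    intro w hw
    have hre := re_div_two_one_add_sq_nonneg (mem_closedBall_zero_iff.mp hw)
    have hcpow : ContinuousAt (· ^ (c : ℂ)) ((1 + w ^ 2) / 2) :=
      Complex.continuousAt_cpow_const_of_re_pos (Or.inl hre) (by simpa using hc)
    exact (hcpow.comp (f := fun w : ℂ => (1 + w ^ 2) / 2) (by fun_prop)).continuousWithinAt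

theorem norm_mul_norm_one_add_sq_div_two_rpow_le_one {c : ℝ} (hc : 0 < c) {h : ℂ → ℂ}
    (hh : DifferentiableOn ℂ h (closedBall 0 1))
    (hbound : ∀ z ∈ closedBall (0 : ℂ) 1, z.re ≠ 0 → ‖h z‖ ≤ |z.re| ^ (-c))
    {z : ℂ} (hz : z ∈ closedBall (0 : ℂ) 1) :
    ‖h z‖ * ‖(1 + z ^ 2) / 2‖ ^ c ≤ 1 := by
  have hdc : DiffContOnCl ℂ (fun w => h w * diskWeight c w) (ball 0 1) :=
    (hh.diffContOnCl_ball le_rfl).smul (diffContOnCl_diskWeight hc)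
  have hfrontier : ∀ w ∈ frontier (ball (0 : ℂ) 1), ‖h w * diskWeight c w‖ ≤ 1 := by
    intro w hw
    rw [frontier_ball _ one_ne_zero, mem_sphere_zero_iff_norm] at hw
    rw [norm_mul, norm_diskWeight_of_norm_eq_one c hw]
    rcases eq_or_ne w.re 0 with hre | hre
    · simp [hre, Real.zero_rpow hc.ne']
    · calc ‖h w‖ * |w.re| ^ c ≤ |w.re| ^ (-c) * |w.re| ^ c := by
            gcongr
            exact hbound w (mem_closedBall_zero_iff.mpr hw.le) hre
        _ = 1 := by rw [← Real.rpow_add (abs_pos.mpr hre), neg_add_cancel, Real.rpow_zero]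
  rw [← norm_diskWeight, ← norm_mul]
  exact Complex.norm_le_of_forall_mem_frontier_norm_le isBounded_ball hdc hfrontier
    (by rwa [closure_ball _ one_ne_zero])

theorem stmt15_general (c : ℝ) (hc : 0 < c) (ρ : ℝ) (hρ1 : ρ < 1) :
    ∃ A : ℝ, ∀ h : ℂ → ℂ, DifferentiableOn ℂ h (closedBall 0 1) →
      (∀ z ∈ closedBall (0 : ℂ) 1, z.re ≠ 0 → ‖h z‖ ≤ |z.re| ^ (-c)) →
      ∀ z ∈ closedBall (0 : ℂ) ρ, ‖h z‖ ≤ A := by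
  refine ⟨((1 - ρ ^ 2) / 2) ^ (-c), fun h hh hbound z hz => ?_⟩
  have hzρ : ‖z‖ ≤ ρ := mem_closedBall_zero_iff.mp hz
  have hpos : 0 < (1 - ρ ^ 2) / 2 := by nlinarith [norm_nonneg z]
  have hlow : (1 - ρ ^ 2) / 2 ≤ ‖(1 + z ^ 2) / 2‖ := by
    have := one_sub_norm_sq_le_re_one_add_sq z
    have := Complex.re_le_norm (1 + z ^ 2)
    rw [norm_div, Complex.norm_two]
    nlinarith [norm_nonneg z]
  have hmain := norm_mul_norm_one_add_sq_div_two_rpow_le_one hc hh hbound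
    (closedBall_subset_closedBall hρ1.le hz)
  calc ‖h z‖ = ‖h z‖ * (((1 - ρ ^ 2) / 2) ^ c * ((1 - ρ ^ 2) / 2) ^ (-c)) := by
        rw [← Real.rpow_add hpos, add_neg_cancel, Real.rpow_zero, mul_one]
    _ ≤ ‖h z‖ * (‖(1 + z ^ 2) / 2‖ ^ c * ((1 - ρ ^ 2) / 2) ^ (-c)) := by gcongr
    _ = ‖h z‖ * ‖(1 + z ^ 2) / 2‖ ^ c * ((1 - ρ ^ 2) / 2) ^ (-c) := (mul_assoc _ _ _).symm
    _ ≤ ((1 - ρ ^ 2) / 2) ^ (-c) := mul_le_of_le_one_left (Real.rpow_nonneg hpos.le _) hmain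

/-- Corollary of the Poisson–Jensen formula: if `h` is analytic on the closed unit disk and
satisfies `|h(z)| ≤ |Re z|^{-c}` there (a vacuous bound when `Re z = 0`), then for each
`0 < ρ < 1` there is a constant `A` depending only on `c` and `ρ` with `|h(z)| ≤ A` on
`|z| ≤ ρ`. -/
theorem stmt15 (c : ℝ) (hc : 0 < c) (ρ : ℝ) (hρ0 : 0 < ρ) (hρ1 : ρ < 1) :
    ∃ A : ℝ, ∀ h : ℂ → ℂ, DifferentiableOn ℂ h (closedBall 0 1) →
      (∀ z ∈ closedBall (0 : ℂ) 1, z.re ≠ 0 → ‖h z‖ ≤ |z.re| ^ (-c)) →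
      ∀ z ∈ closedBall (0 : ℂ) ρ, ‖h z‖ ≤ A :=
  stmt15_general c hc ρ hρ1
end
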